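/- arXiv:2409.18492 — 3 statements merged into one kernel-verified Lean document; each statement's English description precedes it below -/
import Mathlib

section
/- For a finite connected network with positive edge resistances, the effective resistance between u and v equals the infimum over finite families of self-avoiding paths P₁,…,Pₙ from u to v, weights α₁,…,αₙ > 0 summing to 1, and per-path edge resistances r_{e,P_k} > 0 satisfying ∑_{k : e ∈ P_k} 1/r_{e,P_k} ≤ 1/r_e for each edge e, of the quantity ∑_k α_k² ∑_{e ∈ P_k} r_{e,P_k}; moreover the infimum is achieved. -/
open Finset

/-- A unit flow from `u` to `v` on the graph `G`: an antisymmetric function on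
directed edges, vanishing off the edges of `G`, with zero divergence away
from `u, v` and strength `1` at `u`. -/
def IsUnitFlow {V : Type*} [Fintype V] (G : SimpleGraph V) (u v : V)
    (θ : V → V → ℝ) : Prop :=
  (∀ x y, θ x y = -θ y x) ∧
  (∀ x y, ¬ G.Adj x y → θ x y = 0) ∧
  (∀ x, x ≠ u → x ≠ v → ∑ y, θ x y = 0) ∧
  ∑ y, θ u y = 1

/-- Dirichlet energy of a flow with respect to edge resistances `r`
(each unordered edge is counted twice, whence the factor `1/2`). -/
noncomputable def flowEnergy {V : Type*} [Fintype V] (r : Sym2 V → ℝ)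
    (θ : V → V → ℝ) : ℝ :=
  (1 / 2) * ∑ x, ∑ y, (θ x y) ^ 2 * r s(x, y)

/-- The effective resistance between `u` and `v`: the infimum of the Dirichlet
energy over unit flows from `u` to `v`. -/
noncomputable def effRes {V : Type*} [Fintype V] (G : SimpleGraph V)
    (r : Sym2 V → ℝ) (u v : V) : ℝ :=
  sInf (flowEnergy r '' {θ | IsUnitFlow G u v θ})

/-- The set of values `∑ₖ αₖ² ∑_{e ∈ Pₖ} r_{e,Pₖ}` over finite families of
self-avoiding paths `P₁, …, Pₙ` from `u` to `v`, weights `αₖ > 0` summing to `1`,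
and per-path edge resistances `r_{e,Pₖ} > 0` satisfying
`∑_{k : e ∈ Pₖ} 1/r_{e,Pₖ} ≤ 1/r_e` for each edge `e`. -/
noncomputable def pathValues {V : Type*} [Fintype V] [DecidableEq V]
    (G : SimpleGraph V) (r : Sym2 V → ℝ) (u v : V) : Set ℝ :=
  {x | ∃ (n : ℕ) (P : Fin n → G.Walk u v) (α : Fin n → ℝ) (ρ : Fin n → Sym2 V → ℝ),
    (∀ k, (P k).IsPath) ∧
    (∀ k, 0 < α k) ∧ (∑ k, α k = 1) ∧
    (∀ k e, 0 < ρ k e) ∧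
    (∀ e ∈ G.edgeSet, (∑ k, if e ∈ (P k).edges then (ρ k e)⁻¹ else 0) ≤ (r e)⁻¹) ∧
    x = ∑ k, (α k) ^ 2 * ∑ e ∈ (P k).edges.toFinset, ρ k e}

/-!
Both sides equal the least energy of a unit flow. Weighted paths `Pₖ` induce the unit flow
`∑ₖ αₖ Pₖ`, and Cauchy–Schwarz on each edge, `(∑_{k ∋ e} αₖ)² ≤ (∑ αₖ² r_{e,Pₖ}) (∑ 1/r_{e,Pₖ})`,
bounds its energy by the value of the family. Conversely, an energy-minimizing unit flow (it exists
by compactness) splits into weighted `u`–`v` paths, each running along the flow and together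
carrying at most the flow on every edge; their path flow is again a minimizer, and the
resistances `r_{e,Pₖ} = r_e θ(e) / αₖ` make every Cauchy–Schwarz step an equality.
-/

open SimpleGraph

lemma Fintype.sum_sum_sym2_mk {V M : Type*} [Fintype V] [DecidableEq V] [AddCommMonoid M]
    (g : Sym2 V → M) (hg : ∀ a, g s(a, a) = 0) :
    ∑ a, ∑ b, g s(a, b) = 2 • ∑ e, g e := by
  rw [← Fintype.sum_prod_type', smul_sum,
    ← Finset.sum_fiberwise univ (fun p : V × V => s(p.1, p.2)) (fun p => g s(p.1, p.2))]
  refine Finset.sum_congr rfl fun e _ => ?_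
  rw [Finset.sum_congr rfl fun p hp => congrArg g (mem_filter.1 hp).2, sum_const]
  induction e with
  | _ a b =>
    obtain rfl | hab := eq_or_ne a b
    · simp [hg]
    · congr 1
      rw [card_eq_two]
      refine ⟨(a, b), (b, a), by simp [hab], ?_⟩
      ext ⟨x, y⟩
      simp only [mem_filter, mem_univ, true_and, Sym2.eq_iff, mem_insert, mem_singleton,
        Prod.mk.injEq]

lemma sq_sum_le_sum_sq_mul_mul_sum_inv {κ : Type*} (s : Finset κ) (α ρ : κ → ℝ)
    (hρ : ∀ k ∈ s, 0 < ρ k) :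
    (∑ k ∈ s, α k) ^ 2 ≤ (∑ k ∈ s, α k ^ 2 * ρ k) * ∑ k ∈ s, (ρ k)⁻¹ :=
  sum_sq_le_sum_mul_sum_of_sq_le_mul s (fun k hk => mul_nonneg (sq_nonneg _) (hρ k hk).le)
    (fun k hk => (inv_pos.2 (hρ k hk)).le)
    fun k hk => (mul_inv_cancel_right₀ (hρ k hk).ne' _).ge

namespace SimpleGraph.Walk

variable {V : Type*} {G : SimpleGraph V} {x y : V}

lemma adj_of_mem_map_toProd {W : G.Walk x y} {a b : V} (h : (a, b) ∈ W.darts.map Dart.toProd) :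
    G.Adj a b := by
  obtain ⟨⟨_, hadj⟩, -, rfl⟩ := List.mem_map.1 h
  exact hadj

lemma edges_eq_map_toProd (W : G.Walk x y) :
    W.edges = (W.darts.map Dart.toProd).map fun p => s(p.1, p.2) := by
  rw [List.map_map]
  rfl

lemma mk_mem_edges_iff (W : G.Walk x y) (a b : V) :
    s(a, b) ∈ W.edges ↔
      (a, b) ∈ W.darts.map Dart.toProd ∨ (b, a) ∈ W.darts.map Dart.toProd := by
  simp only [edges_eq_map_toProd, List.mem_map, Sym2.eq_iff]
  grind

def Follows (W : G.Walk x y) (θ : V → V → ℝ) : Prop := ∀ d ∈ W.darts, 0 < θ d.fst d.snd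

lemma Follows.pos {W : G.Walk x y} {θ : V → V → ℝ} (h : W.Follows θ) {a b : V}
    (hab : (a, b) ∈ W.darts.map Dart.toProd) : 0 < θ a b := by
  obtain ⟨⟨_, _⟩, hd, rfl⟩ := List.mem_map.1 hab
  exact h _ hd

variable [DecidableEq V]

noncomputable def netFlow (W : G.Walk x y) (a b : V) : ℝ :=
  (W.darts.map Dart.toProd).count (a, b) - (W.darts.map Dart.toProd).count (b, a)

lemma netFlow_swap (W : G.Walk x y) (a b : V) : W.netFlow b a = -W.netFlow a b := by
  simp only [netFlow, neg_sub]

lemma adj_of_netFlow_ne_zero {W : G.Walk x y} {a b : V} (h : W.netFlow a b ≠ 0) :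
    G.Adj a b := by
  by_contra hab
  apply h
  rw [netFlow, List.count_eq_zero.2 fun h => hab (adj_of_mem_map_toProd h),
    List.count_eq_zero.2 fun h => hab (adj_of_mem_map_toProd h).symm, sub_self]

lemma netFlow_cons {z : V} (h : G.Adj x z) (W : G.Walk z y) (a b : V) :
    (cons h W).netFlow a b =
      W.netFlow a b + ((if (x, z) = (a, b) then 1 else 0) - if (x, z) = (b, a) then 1 else 0) := by
  simp only [netFlow, darts_cons, List.map_cons, List.count_cons, beq_iff_eq]
  push_cast
  ring

lemma sum_netFlow [Fintype V] (W : G.Walk x y) (a : V) :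
    ∑ b, W.netFlow a b = (if a = x then 1 else 0) - if a = y then 1 else 0 := by
  induction W with
  | nil => simp [netFlow]
  | cons h W ih =>
    simp only [netFlow_cons, sum_add_distrib, sum_sub_distrib, ih, Prod.mk.injEq]
    simp [ite_and, eq_comm]

variable {W : G.Walk x y}

lemma IsTrail.netFlow_of_mem (hW : W.IsTrail) {a b : V} (hab : (a, b) ∈ W.darts.map Dart.toProd) :
    W.netFlow a b = 1 := by
  have hmap := edges_eq_map_toProd W ▸ hW.edges_nodup
  have hba : (b, a) ∉ W.darts.map Dart.toProd := fun hba => by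
    obtain ⟨rfl, -⟩ := Prod.mk.inj (List.inj_on_of_nodup_map hmap hab hba Sym2.eq_swap)
    exact G.irrefl (adj_of_mem_map_toProd hab)
  rw [netFlow, List.count_eq_one_of_mem hmap.of_map hab, List.count_eq_zero.2 hba]
  norm_num

lemma IsTrail.netFlow_trichotomy (hW : W.IsTrail) (a b : V) :
    ((a, b) ∈ W.darts.map Dart.toProd ∧ W.netFlow a b = 1) ∨
    ((b, a) ∈ W.darts.map Dart.toProd ∧ W.netFlow a b = -1) ∨
    (s(a, b) ∉ W.edges ∧ W.netFlow a b = 0) := by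
  by_cases hab : (a, b) ∈ W.darts.map Dart.toProd
  · exact .inl ⟨hab, hW.netFlow_of_mem hab⟩
  by_cases hba : (b, a) ∈ W.darts.map Dart.toProd
  · refine .inr (.inl ⟨hba, ?_⟩)
    rw [← neg_neg (W.netFlow a b), ← netFlow_swap, hW.netFlow_of_mem hba]
  refine .inr (.inr ⟨by simp [mk_mem_edges_iff, hab, hba], ?_⟩)
  rw [netFlow, List.count_eq_zero.2 hab, List.count_eq_zero.2 hba, sub_self]

lemma IsTrail.netFlow_of_mem_darts (hW : W.IsTrail) {d : G.Dart} (hd : d ∈ W.darts) :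
    W.netFlow d.fst d.snd = 1 :=
  hW.netFlow_of_mem (List.mem_map_of_mem hd)

lemma IsTrail.abs_netFlow (hW : W.IsTrail) (a b : V) :
    |W.netFlow a b| = if s(a, b) ∈ W.edges then 1 else 0 := by
  rcases hW.netFlow_trichotomy a b with ⟨hab, h⟩ | ⟨hba, h⟩ | ⟨he, h⟩
  · simp [h, (W.mk_mem_edges_iff a b).2 (.inl hab)]
  · simp [h, (W.mk_mem_edges_iff a b).2 (.inr hba)]
  · simp [h, he]

lemma IsTrail.netFlow_eq_of_follows (hW : W.IsTrail) {θ : V → V → ℝ}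
    (hθ : ∀ a b, θ a b = -θ b a) (hfol : W.Follows θ) {a b : V} (hab : 0 ≤ θ a b) :
    W.netFlow a b = if s(a, b) ∈ W.edges then 1 else 0 := by
  rcases hW.netFlow_trichotomy a b with ⟨hmem, h⟩ | ⟨hba, -⟩ | ⟨he, h⟩
  · simp [h, (W.mk_mem_edges_iff a b).2 (.inl hmem)]
  · linarith [hfol.pos hba, hθ a b]
  · simp [h, he]

lemma sum_sum_ite_mem_edges [Fintype V] (W : G.Walk x y) (f : Sym2 V → ℝ) :
    ∑ a, ∑ b, (if s(a, b) ∈ W.edges then f s(a, b) else 0) =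
      2 * ∑ e ∈ W.edges.toFinset, f e := by
  rw [Fintype.sum_sum_sym2_mk (fun e => if e ∈ W.edges then f e else 0)
    fun a => if_neg fun h => G.irrefl (W.adj_of_mem_edges h), nsmul_eq_mul, Nat.cast_ofNat,
    ← sum_filter]
  congr 2
  ext e
  simp

end SimpleGraph.Walk

section Flows

variable {V : Type*} {G : SimpleGraph V} {u v : V} {θ : V → V → ℝ} {r : Sym2 V → ℝ}

lemma sq_mul_nonneg_of_support (hr : ∀ e ∈ G.edgeSet, 0 < r e)
    (hθ : ∀ x y, ¬ G.Adj x y → θ x y = 0) (a b : V) : 0 ≤ θ a b ^ 2 * r s(a, b) := by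
  by_cases h : G.Adj a b
  · exact mul_nonneg (sq_nonneg _) (hr _ h).le
  · simp [hθ a b h]

variable [Fintype V]

def flowSubmodule (G : SimpleGraph V) (u v : V) : Submodule ℝ (V → V → ℝ) where
  carrier := {θ | (∀ x y, θ x y = -θ y x) ∧ (∀ x y, ¬ G.Adj x y → θ x y = 0) ∧
    ∀ x, x ≠ u → x ≠ v → ∑ y, θ x y = 0}
  add_mem' := by
    rintro θ φ ⟨hθa, hθs, hθc⟩ ⟨hφa, hφs, hφc⟩
    refine ⟨fun x y => ?_, fun x y h => ?_, fun x hu hv => ?_⟩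
    · simp only [Pi.add_apply, hθa x y, hφa x y, neg_add]
    · simp only [Pi.add_apply, hθs x y h, hφs x y h, add_zero]
    · simp only [Pi.add_apply, sum_add_distrib, hθc x hu hv, hφc x hu hv, add_zero]
  zero_mem' := by simp
  smul_mem' := by
    rintro c θ ⟨hθa, hθs, hθc⟩
    refine ⟨fun x y => ?_, fun x y h => ?_, fun x hu hv => ?_⟩
    · simp only [Pi.smul_apply, smul_eq_mul, hθa x y, mul_neg]
    · simp only [Pi.smul_apply, smul_eq_mul, hθs x y h, mul_zero]
    · simp only [Pi.smul_apply, smul_eq_mul, ← mul_sum, hθc x hu hv, mul_zero]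

lemma isUnitFlow_iff :
    IsUnitFlow G u v θ ↔ θ ∈ flowSubmodule G u v ∧ ∑ y, θ u y = 1 := by
  simp only [IsUnitFlow, flowSubmodule, Submodule.mem_mk, AddSubmonoid.mem_mk,
    AddSubsemigroup.mem_mk, Set.mem_ofPred_eq, and_assoc]

lemma isClosed_setOf_isUnitFlow : IsClosed {θ | IsUnitFlow G u v θ} := by
  simp only [isUnitFlow_iff, Set.ofPred_and]
  exact (flowSubmodule G u v).closed_of_finiteDimensional.inter
    (isClosed_eq (by fun_prop) continuous_const)

lemma SimpleGraph.Walk.netFlow_mem_flowSubmodule [DecidableEq V] (W : G.Walk u v) :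
    W.netFlow ∈ flowSubmodule G u v :=
  ⟨fun a b => W.netFlow_swap b a,
    fun a b h => by_contra fun hne => h (Walk.adj_of_netFlow_ne_zero hne),
    fun a hu hv => by simp [Walk.sum_netFlow, hu, hv]⟩

lemma SimpleGraph.Walk.sum_netFlow_start [DecidableEq V] (W : G.Walk u v) (huv : u ≠ v) :
    ∑ b, W.netFlow u b = 1 := by
  simp [Walk.sum_netFlow, huv]

lemma sq_mul_le_two_mul_flowEnergy (hr : ∀ e ∈ G.edgeSet, 0 < r e)
    (hθ : ∀ x y, ¬ G.Adj x y → θ x y = 0) (a b : V) :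
    θ a b ^ 2 * r s(a, b) ≤ 2 * flowEnergy r θ := by
  have hnonneg := sq_mul_nonneg_of_support hr hθ
  calc θ a b ^ 2 * r s(a, b) ≤ ∑ y, θ a y ^ 2 * r s(a, y) :=
        single_le_sum (fun y _ => hnonneg a y) (mem_univ b)
    _ ≤ ∑ x, ∑ y, θ x y ^ 2 * r s(x, y) :=
        single_le_sum (f := fun x => ∑ y, θ x y ^ 2 * r s(x, y))
          (fun x _ => sum_nonneg fun y _ => hnonneg x y) (mem_univ a)
    _ = 2 * flowEnergy r θ := by rw [flowEnergy]; ring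

lemma flowEnergy_le_of_abs_le (hr : ∀ e ∈ G.edgeSet, 0 < r e)
    (hθ : ∀ x y, ¬ G.Adj x y → θ x y = 0) {φ : V → V → ℝ}
    (hφθ : ∀ x y, |φ x y| ≤ |θ x y|) :
    flowEnergy r φ ≤ flowEnergy r θ := by
  refine mul_le_mul_of_nonneg_left (sum_le_sum fun a _ => sum_le_sum fun b _ => ?_) (by norm_num)
  by_cases h : G.Adj a b
  · exact mul_le_mul_of_nonneg_right (sq_le_sq.2 (hφθ a b)) (hr _ h).le
  · have hφ : φ a b = 0 := abs_nonpos_iff.1 (by simpa [hθ a b h] using hφθ a b)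
    simp [hφ, hθ a b h]

lemma exists_isMinOn_flowEnergy (hr : ∀ e ∈ G.edgeSet, 0 < r e) {θ₀ : V → V → ℝ}
    (hθ₀ : IsUnitFlow G u v θ₀) :
    ∃ θ ∈ {θ | IsUnitFlow G u v θ},
      IsMinOn (flowEnergy r) {θ | IsUnitFlow G u v θ} θ := by
  set box : Set (V → V → ℝ) :=
    Set.univ.pi fun a => Set.univ.pi fun b =>
      Set.Icc (-√(2 * flowEnergy r θ₀ / r s(a, b))) √(2 * flowEnergy r θ₀ / r s(a, b))
  have hbox : IsCompact box := isCompact_univ_pi fun a => isCompact_univ_pi fun b => isCompact_Icc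
  have hsub : ∀ θ, IsUnitFlow G u v θ → flowEnergy r θ ≤ flowEnergy r θ₀ →
      θ ∈ box := by
    intro θ hθ hle a _ b _
    rw [Set.mem_Icc, ← abs_le]
    by_cases h : G.Adj a b
    · refine Real.abs_le_sqrt ((le_div_iff₀ (hr _ h)).2 ?_)
      linarith [sq_mul_le_two_mul_flowEnergy hr hθ.2.1 a b]
    · simp [hθ.2.1 a b h]
  refine ContinuousOn.exists_isMinOn' (by unfold flowEnergy; fun_prop) isClosed_setOf_isUnitFlow
    hθ₀ ?_
  rw [Filter.eventually_inf_principal]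
  filter_upwards [hbox.compl_mem_cocompact] with θ hθbox hθ
  by_contra! hlt
  exact hθbox (hsub θ hθ hlt.le)

end Flows

section PathFamilies

variable {V : Type*} [DecidableEq V] {G : SimpleGraph V} {u v : V}
  {ι : Type*} [Fintype ι] {P : ι → G.Walk u v} {α : ι → ℝ} {r : Sym2 V → ℝ}

noncomputable def pathFlow (P : ι → G.Walk u v) (α : ι → ℝ) : V → V → ℝ :=
  ∑ k, α k • (P k).netFlow

noncomputable def pathLoad (P : ι → G.Walk u v) (α : ι → ℝ) (e : Sym2 V) : ℝ :=
  ∑ k, if e ∈ (P k).edges then α k else 0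

noncomputable def pathValue (P : ι → G.Walk u v) (α : ι → ℝ) (ρ : ι → Sym2 V → ℝ) : ℝ :=
  ∑ k, α k ^ 2 * ∑ e ∈ (P k).edges.toFinset, ρ k e

/-- Parallel resistors sharing each edge among the paths through it in proportion to their
weights, so that `∑_{k ∋ e} 1 / r_{e,Pₖ} = 1 / r_e`; off `Pₖ` the value `1` is only a positive
filler. -/
noncomputable def splitResistance (r : Sym2 V → ℝ) (P : ι → G.Walk u v) (α : ι → ℝ)
    (k : ι) (e : Sym2 V) : ℝ :=
  if e ∈ (P k).edges then r e * pathLoad P α e / α k else 1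

lemma pathFlow_apply (a b : V) : pathFlow P α a b = ∑ k, α k * (P k).netFlow a b := by
  simp [pathFlow, Finset.sum_apply]

lemma pathFlow_eq_zero_of_not_adj {a b : V} (h : ¬ G.Adj a b) : pathFlow P α a b = 0 := by
  rw [pathFlow_apply]
  refine sum_eq_zero fun k _ => ?_
  rw [not_not.1 (mt Walk.adj_of_netFlow_ne_zero h), mul_zero]

lemma pathLoad_nonneg (hα : ∀ k, 0 ≤ α k) (e : Sym2 V) : 0 ≤ pathLoad P α e :=
  sum_nonneg fun k _ => by split_ifs; exacts [hα k, le_rfl]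

lemma abs_pathFlow_le_pathLoad (hP : ∀ k, (P k).IsTrail) (hα : ∀ k, 0 ≤ α k) (a b : V) :
    |pathFlow P α a b| ≤ pathLoad P α s(a, b) := by
  rw [pathFlow_apply, pathLoad]
  refine (abs_sum_le_sum_abs _ _).trans (sum_le_sum fun k _ => ?_)
  rw [abs_mul, abs_of_nonneg (hα k), (hP k).abs_netFlow]
  split_ifs <;> simp

lemma abs_pathFlow_eq_pathLoad (hP : ∀ k, (P k).IsTrail) (hα : ∀ k, 0 ≤ α k)
    {θ : V → V → ℝ} (hθ : ∀ a b, θ a b = -θ b a) (hfol : ∀ k, (P k).Follows θ)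
    (a b : V) :
    |pathFlow P α a b| = pathLoad P α s(a, b) := by
  wlog hab : 0 ≤ θ a b generalizing a b
  · rw [pathFlow_apply, ← abs_neg, ← sum_neg_distrib, Sym2.eq_swap,
      ← this b a (by linarith [hθ a b])]
    simp [pathFlow_apply, (P _).netFlow_swap a b]
  have h : pathFlow P α a b = pathLoad P α s(a, b) := by
    rw [pathFlow_apply, pathLoad]
    exact Finset.sum_congr rfl fun k _ => by simp [(hP k).netFlow_eq_of_follows hθ (hfol k) hab]
  rw [h, abs_of_nonneg (pathLoad_nonneg hα _)]

/-- Cauchy–Schwarz over the paths through the edge `s(a, b)`. -/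
lemma sq_pathFlow_mul_le (hr : ∀ e ∈ G.edgeSet, 0 < r e) (hP : ∀ k, (P k).IsTrail)
    (hα : ∀ k, 0 ≤ α k) {ρ : ι → Sym2 V → ℝ} (hρ : ∀ k e, 0 < ρ k e)
    (hcon : ∀ e ∈ G.edgeSet,
      (∑ k, if e ∈ (P k).edges then (ρ k e)⁻¹ else 0) ≤ (r e)⁻¹)
    (a b : V) : pathFlow P α a b ^ 2 * r s(a, b) ≤
      ∑ k, if s(a, b) ∈ (P k).edges then α k ^ 2 * ρ k s(a, b) else 0 := by
  set S := univ.filter fun k => s(a, b) ∈ (P k).edges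
  have hA : 0 ≤ ∑ k ∈ S, α k ^ 2 * ρ k s(a, b) :=
    sum_nonneg fun k _ => mul_nonneg (sq_nonneg _) (hρ k _).le
  rw [← sum_filter]
  by_cases hab : G.Adj a b
  swap
  · simpa [pathFlow_eq_zero_of_not_adj hab] using hA
  have hre := hr s(a, b) hab
  have hB := hcon s(a, b) hab
  rw [← sum_filter] at hB
  calc pathFlow P α a b ^ 2 * r s(a, b) ≤ (∑ k ∈ S, α k) ^ 2 * r s(a, b) := by
        rw [← sq_abs, sum_filter, ← pathLoad]
        gcongr
        exact abs_pathFlow_le_pathLoad hP hα a b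
    _ ≤ (∑ k ∈ S, α k ^ 2 * ρ k s(a, b)) * (∑ k ∈ S, (ρ k s(a, b))⁻¹) *
          r s(a, b) := by
        gcongr
        exact sq_sum_le_sum_sq_mul_mul_sum_inv S _ _ fun k _ => hρ k _
    _ ≤ (∑ k ∈ S, α k ^ 2 * ρ k s(a, b)) * (r s(a, b))⁻¹ * r s(a, b) := by gcongr
    _ = ∑ k ∈ S, α k ^ 2 * ρ k s(a, b) := by field_simp

lemma splitResistance_pos (hr : ∀ e ∈ G.edgeSet, 0 < r e) (hα : ∀ k, 0 < α k) (k : ι)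
    (e : Sym2 V) : 0 < splitResistance r P α k e := by
  unfold splitResistance
  split_ifs with he
  · have hload : α k ≤ pathLoad P α e := by
      simpa [pathLoad, he] using single_le_sum (f := fun j => if e ∈ (P j).edges then α j else 0)
        (fun j _ => by split_ifs; exacts [(hα j).le, le_rfl]) (mem_univ k)
    exact div_pos (mul_pos (hr e ((P k).edges_subset_edgeSet he)) ((hα k).trans_le hload)) (hα k)
  · exact one_pos

lemma sum_inv_splitResistance_le (hr : ∀ e ∈ G.edgeSet, 0 < r e) {e : Sym2 V}
    (he : e ∈ G.edgeSet) :
    (∑ k, if e ∈ (P k).edges then (splitResistance r P α k e)⁻¹ else 0) ≤ (r e)⁻¹ := by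
  have hsum : (∑ k, if e ∈ (P k).edges then (splitResistance r P α k e)⁻¹ else 0) =
      pathLoad P α e / (r e * pathLoad P α e) := by
    rw [pathLoad, sum_div]
    exact Finset.sum_congr rfl fun k _ => by
      unfold splitResistance
      split_ifs <;> simp [inv_div, pathLoad]
  rw [hsum]
  rcases eq_or_ne (pathLoad P α e) 0 with h0 | h0
  · simp [h0, (hr e he).le]
  · rw [div_mul_cancel_right₀ h0]

variable [Fintype V]

lemma isUnitFlow_pathFlow (huv : u ≠ v) (hα : ∑ k, α k = 1) :
    IsUnitFlow G u v (pathFlow P α) := by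
  refine isUnitFlow_iff.2 ⟨Submodule.sum_mem _ fun k _ =>
    Submodule.smul_mem _ _ (P k).netFlow_mem_flowSubmodule, ?_⟩
  simp_rw [pathFlow_apply]
  rw [Finset.sum_comm]
  simp [← mul_sum, (P _).sum_netFlow_start huv, hα]

lemma pathValue_eq_half_sum (ρ : ι → Sym2 V → ℝ) : pathValue P α ρ =
    1 / 2 * ∑ a, ∑ b, ∑ k,
      if s(a, b) ∈ (P k).edges then α k ^ 2 * ρ k s(a, b) else 0 := by
  have hk : ∀ k, α k ^ 2 * ∑ e ∈ (P k).edges.toFinset, ρ k e = 1 / 2 *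
      ∑ a, ∑ b, if s(a, b) ∈ (P k).edges then α k ^ 2 * ρ k s(a, b) else 0 := fun k => by
    have h := (P k).sum_sum_ite_mem_edges fun e => α k ^ 2 * ρ k e
    beta_reduce at h
    rw [h, mul_sum]
    ring
  rw [pathValue, Finset.sum_congr rfl fun k _ => hk k, ← mul_sum, Finset.sum_comm]
  exact congrArg _ (Finset.sum_congr rfl fun a _ => Finset.sum_comm)

lemma flowEnergy_pathFlow_le_pathValue (hr : ∀ e ∈ G.edgeSet, 0 < r e)
    (hP : ∀ k, (P k).IsTrail) (hα : ∀ k, 0 ≤ α k) {ρ : ι → Sym2 V → ℝ} (hρ : ∀ k e, 0 < ρ k e)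
    (hcon : ∀ e ∈ G.edgeSet,
      (∑ k, if e ∈ (P k).edges then (ρ k e)⁻¹ else 0) ≤ (r e)⁻¹) :
    flowEnergy r (pathFlow P α) ≤ pathValue P α ρ := by
  rw [pathValue_eq_half_sum, flowEnergy]
  exact mul_le_mul_of_nonneg_left (sum_le_sum fun a _ => sum_le_sum fun b _ =>
    sq_pathFlow_mul_le hr hP hα hρ hcon a b) (by norm_num)

lemma pathValue_splitResistance (hα : ∀ k, 0 < α k)
    (hload : ∀ a b, |pathFlow P α a b| = pathLoad P α s(a, b)) :
    pathValue P α (splitResistance r P α) = flowEnergy r (pathFlow P α) := by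
  rw [pathValue_eq_half_sum, flowEnergy]
  refine congrArg _ (Finset.sum_congr rfl fun a _ => Finset.sum_congr rfl fun b _ => ?_)
  have hk : ∀ k,
      (if s(a, b) ∈ (P k).edges then α k ^ 2 * splitResistance r P α k s(a, b) else 0) =
        (if s(a, b) ∈ (P k).edges then α k else 0) * (r s(a, b) * pathLoad P α s(a, b)) := by
    intro k
    unfold splitResistance
    split_ifs
    · field_simp [(hα k).ne']
    · simp
  rw [Finset.sum_congr rfl fun k _ => hk k, ← sum_mul, ← pathLoad, ← sq_abs, hload]
  ring

end PathFamilies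

section ConformalParts

variable {V : Type*} {θ φ : V → V → ℝ}

def IsConformalPart (φ θ : V → V → ℝ) : Prop := ∀ a b, φ a b ∈ Set.uIcc 0 (θ a b)

namespace IsConformalPart

lemma abs_le (h : IsConformalPart φ θ) (a b : V) : |φ a b| ≤ |θ a b| := by
  rcases Set.mem_uIcc.1 (h a b) with ⟨h₀, h₁⟩ | ⟨h₀, h₁⟩
  exacts [abs_le_abs h₁ (by linarith), abs_le_abs_of_nonpos h₁ h₀]

lemma pos (h : IsConformalPart φ θ) {a b : V} (hab : 0 < φ a b) : 0 < θ a b := by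
  have := Set.mem_uIcc.1 (h a b)
  grind

lemma sub (h : IsConformalPart φ θ) : IsConformalPart (θ - φ) θ := fun a b => by
  have := Set.mem_uIcc.1 (h a b)
  simp only [Pi.sub_apply, Set.mem_uIcc]
  grind

lemma add (h : IsConformalPart φ θ) {ψ : V → V → ℝ} (hψ : IsConformalPart ψ (θ - φ)) :
    IsConformalPart (φ + ψ) θ := fun a b => by
  have := Set.mem_uIcc.1 (h a b)
  have := Set.mem_uIcc.1 (hψ a b)
  simp only [Pi.add_apply, Pi.sub_apply, Set.mem_uIcc] at *
  grind

lemma card_filter_pos_lt [Fintype V] (h : IsConformalPart φ θ) {a b : V} (hθ : 0 < θ a b)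
    (hφ : φ a b = 0) :
    #(univ.filter fun p : V × V => 0 < φ p.1 p.2) <
      #(univ.filter fun p : V × V => 0 < θ p.1 p.2) := by
  refine card_lt_card ((ssubset_iff_of_subset fun p hp => ?_).2 ⟨(a, b), ?_, ?_⟩)
  · simp only [mem_filter, mem_univ, true_and] at hp ⊢
    exact h.pos hp
  · simpa using hθ
  · simp [hφ]

end IsConformalPart

lemma isConformalPart_smul_netFlow [DecidableEq V] {G : SimpleGraph V} {u v : V}
    (hθ : ∀ a b, θ a b = -θ b a) {W : G.Walk u v} (hW : W.IsTrail) {β : ℝ} (hβ : 0 ≤ β)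
    (hβθ : ∀ d ∈ W.darts, β ≤ θ d.fst d.snd) : IsConformalPart (β • W.netFlow) θ := by
  have hle : ∀ a b, (a, b) ∈ W.darts.map Dart.toProd → β ≤ θ a b := by
    intro a b hab
    obtain ⟨⟨_, _⟩, hd, rfl⟩ := List.mem_map.1 hab
    exact hβθ _ hd
  intro a b
  simp only [Pi.smul_apply, smul_eq_mul, Set.mem_uIcc]
  rcases hW.netFlow_trichotomy a b with ⟨hab, h⟩ | ⟨hba, h⟩ | ⟨-, h⟩
  · rw [h, mul_one]
    exact .inl ⟨hβ, hle a b hab⟩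
  · rw [h, mul_neg_one]
    exact .inr ⟨by linarith [hle b a hba, hθ a b], by linarith⟩
  · simp [h, le_total]

end ConformalParts

section Decomposition

variable {V : Type*} [Fintype V] [DecidableEq V] {G : SimpleGraph V} {u v : V}
  {θ : V → V → ℝ}

lemma sum_sum_eq_sum_sum_compl (hθ : ∀ x y, θ x y = -θ y x) (R : Finset V) :
    ∑ x ∈ R, ∑ y, θ x y = ∑ x ∈ R, ∑ y ∈ Rᶜ, θ x y := by
  have hRR : ∑ x ∈ R, ∑ y ∈ R, θ x y = ∑ y ∈ R, ∑ x ∈ R, -θ y x := by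
    rw [Finset.sum_comm]
    exact Finset.sum_congr rfl fun y _ => Finset.sum_congr rfl fun x _ => hθ x y
  simp only [sum_neg_distrib] at hRR
  simp_rw [← sum_add_sum_compl R (θ _), sum_add_distrib]
  linarith

/-- A cut argument: the vertices reachable from `u` along `θ`-positive darts have total
outflow at most `0` unless they contain `v`. -/
lemma exists_isPath_follows (hθ : θ ∈ flowSubmodule G u v) (hs : 0 < ∑ y, θ u y) :
    ∃ W : G.Walk u v, W.IsPath ∧ W.Follows θ := by
  classical
  set R := univ.filter fun x => ∃ W : G.Walk u x, W.Follows θ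
  have hu : u ∈ R := mem_filter.2 ⟨mem_univ _, .nil, by simp [Walk.Follows]⟩
  have hR : ∀ x ∈ R, ∀ y, 0 < θ x y → y ∈ R := by
    intro x hx y hxy
    obtain ⟨W, hW⟩ := (mem_filter.1 hx).2
    have hadj : G.Adj x y := by_contra fun h => hxy.ne' (hθ.2.1 x y h)
    refine mem_filter.2 ⟨mem_univ _, W.concat hadj, fun d hd => ?_⟩
    rw [Walk.darts_concat, List.concat_eq_append, List.mem_append, List.mem_singleton] at hd
    rcases hd with hd | rfl
    exacts [hW d hd, hxy]
  by_cases hv : v ∈ R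
  · obtain ⟨W, hW⟩ := (mem_filter.1 hv).2
    exact ⟨W.bypass, W.bypass_isPath, fun d hd => hW d (W.darts_bypass_subset_darts hd)⟩
  have hout : ∑ x ∈ R, ∑ y, θ x y = ∑ y, θ u y :=
    sum_eq_single_of_mem u hu fun x hx hxu => hθ.2.2 x hxu (ne_of_mem_of_not_mem hx hv)
  have hcut : ∑ x ∈ R, ∑ y ∈ Rᶜ, θ x y ≤ 0 :=
    sum_nonpos fun x hx => sum_nonpos fun y hy => not_lt.1 fun h => mem_compl.1 hy (hR x hx y h)
  linarith [sum_sum_eq_sum_sum_compl hθ.1 R]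

structure IsPathDecomposition {ι : Type*} [Fintype ι] (θ : V → V → ℝ)
    (P : ι → G.Walk u v) (α : ι → ℝ) : Prop where
  isPath : ∀ k, (P k).IsPath
  pos : ∀ k, 0 < α k
  sum_eq : ∑ k, α k = ∑ y, θ u y
  follows : ∀ k, (P k).Follows θ
  isConformalPart : IsConformalPart (pathFlow P α) θ

lemma IsPathDecomposition.of_isEmpty {ι : Type*} [Fintype ι] [IsEmpty ι] (hs : ∑ y, θ u y = 0)
    (P : ι → G.Walk u v) (α : ι → ℝ) : IsPathDecomposition θ P α where
  isPath := isEmptyElim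
  pos := isEmptyElim
  sum_eq := by simp [hs]
  follows := isEmptyElim
  isConformalPart a b := by simp [pathFlow]

lemma IsPathDecomposition.cons (huv : u ≠ v) (hθ : ∀ a b, θ a b = -θ b a) {W : G.Walk u v}
    (hW : W.IsPath) (hfol : W.Follows θ) {β : ℝ} (hβ : 0 < β)
    (hβθ : ∀ d ∈ W.darts, β ≤ θ d.fst d.snd) {n : ℕ} {P : Fin n → G.Walk u v}
    {α : Fin n → ℝ} (h : IsPathDecomposition (θ - β • W.netFlow) P α) :
    IsPathDecomposition θ (Fin.cons W P : Fin (n + 1) → G.Walk u v) (Fin.cons β α) where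
  isPath := Fin.cases hW h.isPath
  pos := Fin.cases hβ h.pos
  sum_eq := by
    rw [Fin.sum_univ_succ, Fin.cons_zero]
    simp_rw [Fin.cons_succ, h.sum_eq, Pi.sub_apply, Pi.smul_apply, smul_eq_mul, sum_sub_distrib,
      ← mul_sum, W.sum_netFlow_start huv]
    ring
  follows := by
    have hpart := (isConformalPart_smul_netFlow hθ hW.isTrail hβ.le hβθ).sub
    exact Fin.cases hfol fun k d hd => hpart.pos (h.follows k d hd)
  isConformalPart := by
    have hpathFlow : pathFlow (Fin.cons W P : Fin (n + 1) → G.Walk u v) (Fin.cons β α) =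
        β • W.netFlow + pathFlow P α := by
      simp [pathFlow, Fin.sum_univ_succ]
    rw [hpathFlow]
    exact (isConformalPart_smul_netFlow hθ hW.isTrail hβ.le hβθ).add h.isConformalPart

lemma IsPathDecomposition.abs_pathFlow {ι : Type*} [Fintype ι] {P : ι → G.Walk u v}
    {α : ι → ℝ} (h : IsPathDecomposition θ P α) (hθ : ∀ a b, θ a b = -θ b a)
    (a b : V) :
    |pathFlow P α a b| = pathLoad P α s(a, b) :=
  abs_pathFlow_eq_pathLoad (fun k => (h.isPath k).isTrail) (fun k => (h.pos k).le) hθ h.follows a b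

/-- Flow decomposition: peel off a `θ`-positive path carrying the least flow on it (or all the
remaining strength), which zeroes a positive pair or exhausts the strength. -/
theorem exists_isPathDecomposition (huv : u ≠ v) (hθ : θ ∈ flowSubmodule G u v)
    (hs : 0 ≤ ∑ y, θ u y) :
    ∃ (n : ℕ) (P : Fin n → G.Walk u v) (α : Fin n → ℝ), IsPathDecomposition θ P α := by
  induction hN : #(univ.filter fun p : V × V => 0 < θ p.1 p.2) using Nat.strong_induction_on
    generalizing θ with
  | _ N ih =>
  rcases hs.eq_or_lt with hs0 | hspos
  · exact ⟨0, _, _, .of_isEmpty hs0.symm finZeroElim finZeroElim⟩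
  obtain ⟨W, hW, hfol⟩ := exists_isPath_follows hθ hspos
  have hdarts : W.darts.toFinset.Nonempty := by
    simpa [List.toFinset_nonempty_iff, Walk.darts_eq_nil] using W.not_nil_of_ne huv
  obtain ⟨d₀, hd₀, hmin⟩ :=
    W.darts.toFinset.exists_min_image (fun d => θ d.fst d.snd) hdarts
  set β := min (∑ y, θ u y) (θ d₀.fst d₀.snd)
  have hβ : 0 < β := lt_min hspos (hfol d₀ (List.mem_toFinset.1 hd₀))
  have hβθ : ∀ d ∈ W.darts, β ≤ θ d.fst d.snd :=
    fun d hd => (min_le_right _ _).trans (hmin d (List.mem_toFinset.2 hd))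
  have hs' : ∑ y, (θ - β • W.netFlow) u y = ∑ y, θ u y - β := by
    simp [sum_sub_distrib, ← mul_sum, W.sum_netFlow_start huv]
  have hpart := isConformalPart_smul_netFlow hθ.1 hW.isTrail hβ.le hβθ
  obtain ⟨n, P, α, hdec⟩ : ∃ (n : ℕ) (P : Fin n → G.Walk u v) (α : Fin n → ℝ),
      IsPathDecomposition (θ - β • W.netFlow) P α := by
    rcases (sub_nonneg.2 (min_le_left _ _) : 0 ≤ ∑ y, θ u y - β).eq_or_lt with h0 | hlt
    · exact ⟨0, _, _, .of_isEmpty (hs'.trans h0.symm) finZeroElim finZeroElim⟩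
    have hβ₀ : β = θ d₀.fst d₀.snd :=
      min_eq_right (le_of_not_ge fun h => by simp [β, min_eq_left h] at hlt)
    refine ih _ (hN ▸ hpart.sub.card_filter_pos_lt (hfol d₀ (List.mem_toFinset.1 hd₀)) ?_)
      (sub_mem hθ (Submodule.smul_mem _ _ W.netFlow_mem_flowSubmodule)) (hs' ▸ hlt.le) rfl
    simp [hβ₀, (hW.isTrail).netFlow_of_mem_darts (List.mem_toFinset.1 hd₀)]
  exact ⟨n + 1, _, _, hdec.cons huv hθ.1 hW hfol hβ hβθ⟩

end Decomposition

/-- **Path-decomposition characterization of the effective resistance**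
(generalized parallel/series law): for a finite connected network with positive
edge resistances, the effective resistance between `u` and `v` equals the
infimum of `∑ₖ αₖ² ∑_{e ∈ Pₖ} r_{e,Pₖ}` over all weighted families of
self-avoiding paths as above; moreover the infimum is achieved. -/
theorem effRes_eq_inf_pathValues {V : Type*} [Fintype V] [DecidableEq V]
    (G : SimpleGraph V) (hG : G.Connected)
    (r : Sym2 V → ℝ) (hr : ∀ e ∈ G.edgeSet, 0 < r e)
    (u v : V) (huv : u ≠ v) :
    effRes G r u v = sInf (pathValues G r u v) ∧
      sInf (pathValues G r u v) ∈ pathValues G r u v := by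
  obtain ⟨W⟩ := hG.preconnected u v
  obtain ⟨θ, hθ, hmin⟩ := exists_isMinOn_flowEnergy hr
    (isUnitFlow_iff.2 ⟨W.netFlow_mem_flowSubmodule, W.sum_netFlow_start huv⟩)
  rw [isMinOn_iff] at hmin
  obtain ⟨hθflow, hθunit⟩ := isUnitFlow_iff.1 hθ
  obtain ⟨n, P, α, hdec⟩ := exists_isPathDecomposition huv hθflow (hθunit ▸ zero_le_one)
  have hsum : ∑ k, α k = 1 := hdec.sum_eq.trans hθunit
  have hE : flowEnergy r (pathFlow P α) = flowEnergy r θ :=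
    le_antisymm (flowEnergy_le_of_abs_le hr hθflow.2.1 hdec.isConformalPart.abs_le)
      (hmin _ (isUnitFlow_pathFlow huv hsum))
  have hmem : flowEnergy r θ ∈ pathValues G r u v :=
    ⟨n, P, α, splitResistance r P α, hdec.isPath, hdec.pos, hsum,
      splitResistance_pos hr hdec.pos, fun e he => sum_inv_splitResistance_le hr he,
      hE.symm.trans (pathValue_splitResistance hdec.pos (hdec.abs_pathFlow hθflow.1)).symm⟩
  have hlow : flowEnergy r θ ∈ lowerBounds (pathValues G r u v) := by
    rintro _ ⟨m, Q, β, ρ, hQ, hβ, hβsum, hρ, hcon, rfl⟩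
    exact (hmin _ (isUnitFlow_pathFlow huv hβsum)).trans (flowEnergy_pathFlow_le_pathValue hr
      (fun k => (hQ k).isTrail) (fun k => (hβ k).le) hρ hcon)
  have hflows : IsLeast (flowEnergy r '' {θ | IsUnitFlow G u v θ}) (flowEnergy r θ) :=
    ⟨Set.mem_image_of_mem _ hθ, Set.forall_mem_image.2 hmin⟩
  rw [effRes, hflows.csInf_eq, IsLeast.csInf_eq ⟨hmem, hlow⟩]
  exact ⟨rfl, hmem⟩
end

section
/- Generalized series law: let G be a finite network, H₁,…,Hₙ subgraphs of G, Aᵢ, Zᵢ disjoint vertex sets in Hᵢ, and A, Z disjoint vertex sets in G. Suppose that for every choice of paths Pᵢ within Hᵢ connecting Aᵢ to Zᵢ (for each i), the union ⋃ᵢ Pᵢ contains a path from A to Z. Then R_G(A, Z) ≤ ∑_{i=1}^n R_{Hᵢ}(Aᵢ, Zᵢ). -/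
open Finset

/-- A unit flow from the vertex set `A` to the vertex set `Z` on the graph `G`
(`A` and `Z` are each identified with a single vertex): antisymmetric, supported
on edges of `G`, divergence-free outside `A ∪ Z`, and with total outflow `1`
from `A`. -/
def IsUnitFlowBetween {V : Type*} [Fintype V] (G : SimpleGraph V)
    (A Z : Finset V) (θ : V → V → ℝ) : Prop :=
  (∀ x y, θ x y = -θ y x) ∧
  (∀ x y, ¬ G.Adj x y → θ x y = 0) ∧
  (∀ x, x ∉ A → x ∉ Z → ∑ y, θ x y = 0) ∧
  ∑ x ∈ A, ∑ y, θ x y = 1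

/-- Effective resistance between the vertex sets `A` and `Z` in the graph `G`. -/
noncomputable def effResBetween {V : Type*} [Fintype V] (G : SimpleGraph V)
    (r : Sym2 V → ℝ) (A Z : Finset V) : ℝ :=
  sInf (flowEnergy r '' {θ | IsUnitFlowBetween G A Z θ})

/-! Fix unit flows `θᵢ` in the `Hᵢ` and give the edges of `G` the capacities `w = √(∑ᵢ θᵢ²)`.
By the path hypothesis, every cut separating `A` from `Z` in `G` separates some `Aᵢ` from `Zᵢ`
in `Hᵢ`, so its capacity is at least what `θᵢ` carries across it, namely `1`. A maximal flow
below `w` (it exists by compactness; convex combinations of augmentations along residual arcs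
show that its residual graph separates `A` from `Z`) saturates a cut, so has value `v ≥ 1`, and
`f / v` is a unit flow of energy at most `½ ∑ w² r = ∑ᵢ E(θᵢ)`. Then take infima over the `θᵢ`. -/

open SimpleGraph

lemma le_sum_csInf {ι : Type*} [Fintype ι] {s : ι → Set ℝ} (hs : ∀ i, (s i).Nonempty) {c : ℝ}
    (h : ∀ x : ι → ℝ, (∀ i, x i ∈ s i) → c ≤ ∑ i, x i) : c ≤ ∑ i, sInf (s i) := by
  refine le_of_forall_pos_lt_add fun ε hε ↦ ?_
  have hδ : 0 < ε / (Fintype.card ι + 1) := by positivity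
  choose x hx hxlt using fun i ↦ Real.lt_sInf_add_pos (hs i) hδ
  calc c ≤ ∑ i, x i := h x hx
    _ ≤ ∑ i, (sInf (s i) + ε / (Fintype.card ι + 1)) := Finset.sum_le_sum fun i _ ↦ (hxlt i).le
    _ < ∑ i, sInf (s i) + ε := by
        rw [Finset.sum_add_distrib, Finset.sum_const, Finset.card_univ, nsmul_eq_mul]
        gcongr
        rw [mul_div_assoc', div_lt_iff₀ (by positivity)]
        linarith

section

variable {V : Type*}

section FlowAlgebra

variable {θ : V → V → ℝ}

lemma sum_sum_eq_zero_of_antisymm (hθ : ∀ x y, θ x y = -θ y x) (T : Finset V) :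
    ∑ x ∈ T, ∑ y ∈ T, θ x y = 0 := by
  have h : ∑ x ∈ T, ∑ y ∈ T, θ x y = -∑ x ∈ T, ∑ y ∈ T, θ x y := by
    conv_lhs => rw [Finset.sum_comm]
    simp only [← Finset.sum_neg_distrib, ← hθ]
  linarith

variable [Fintype V]

lemma isUnitFlowBetween_inv_smul {G : SimpleGraph V} {A Z : Finset V}
    (hθ : ∀ x y, θ x y = -θ y x) (hG : ∀ x y, ¬G.Adj x y → θ x y = 0)
    (hcons : ∀ x, x ∉ A → x ∉ Z → ∑ y, θ x y = 0) (hval : ∑ x ∈ A, ∑ y, θ x y ≠ 0) :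
    IsUnitFlowBetween G A Z ((∑ x ∈ A, ∑ y, θ x y)⁻¹ • θ) := by
  refine ⟨fun x y ↦ ?_, fun x y hxy ↦ ?_, fun x hxA hxZ ↦ ?_, ?_⟩
  · simp only [Pi.smul_apply, smul_eq_mul, hθ x y, mul_neg]
  · simp [hG x y hxy]
  · simp [← Finset.mul_sum, hcons x hxA hxZ]
  · simp only [Pi.smul_apply, smul_eq_mul, ← Finset.mul_sum, inv_mul_cancel₀ hval]

variable [DecidableEq V]

lemma sum_sum_compl_eq_sum_sum_of_antisymm (hθ : ∀ x y, θ x y = -θ y x) (T : Finset V) :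
    ∑ x ∈ T, ∑ y ∈ Tᶜ, θ x y = ∑ x ∈ T, ∑ y, θ x y := by
  simp_rw [← Finset.sum_add_sum_compl T (θ _)]
  rw [Finset.sum_add_distrib, sum_sum_eq_zero_of_antisymm hθ, zero_add]

lemma sum_sum_compl_eq_sum_source {A Z T : Finset V} (hθ : ∀ x y, θ x y = -θ y x)
    (hcons : ∀ x, x ∉ A → x ∉ Z → ∑ y, θ x y = 0) (hAT : A ⊆ T) (hTZ : Disjoint T Z) :
    ∑ x ∈ T, ∑ y ∈ Tᶜ, θ x y = ∑ x ∈ A, ∑ y, θ x y := by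
  rw [sum_sum_compl_eq_sum_sum_of_antisymm hθ]
  exact (Finset.sum_subset hAT fun x hxT hxA ↦ hcons x hxA (Finset.disjoint_left.mp hTZ hxT)).symm

lemma IsUnitFlowBetween.sum_sum_compl_eq_one {G : SimpleGraph V} {A Z T : Finset V}
    (hθ : IsUnitFlowBetween G A Z θ) (hAT : A ⊆ T) (hTZ : Disjoint T Z) :
    ∑ x ∈ T, ∑ y ∈ Tᶜ, θ x y = 1 :=
  (sum_sum_compl_eq_sum_source hθ.1 hθ.2.2.1 hAT hTZ).trans hθ.2.2.2

end FlowAlgebra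

section UnitFlows

variable [DecidableEq V]

def arcFlow (a b x y : V) : ℝ :=
  (if x = a ∧ y = b then 1 else 0) - (if x = b ∧ y = a then 1 else 0)

lemma arcFlow_antisymm (a b x y : V) : arcFlow a b x y = -arcFlow a b y x := by
  unfold arcFlow
  simp only [and_comm (a := y = a), and_comm (a := y = b)]
  ring

lemma arcFlow_eq_zero_of_not_adj {G : SimpleGraph V} {a b x y : V} (hab : G.Adj a b)
    (hxy : ¬G.Adj x y) : arcFlow a b x y = 0 := by
  simp only [arcFlow]
  split_ifs <;> simp_all [G.adj_comm]

variable [Fintype V]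

lemma sum_arcFlow (a b x : V) :
    ∑ y, arcFlow a b x y = (if x = a then 1 else 0) - (if x = b then 1 else 0) := by
  simp [arcFlow, Finset.sum_sub_distrib, ite_and]

lemma exists_flow_of_walk {G : SimpleGraph V} {a z : V} (W : G.Walk a z) :
    ∃ θ : V → V → ℝ, (∀ x y, θ x y = -θ y x) ∧ (∀ x y, ¬G.Adj x y → θ x y = 0) ∧
      ∀ x, ∑ y, θ x y = (if x = a then 1 else 0) - (if x = z then 1 else 0) := by
  induction W with
  | nil => exact ⟨0, by simp, by simp, by simp⟩
  | @cons u b z hub W ih =>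
    obtain ⟨θ, hanti, hsupp, hdiv⟩ := ih
    refine ⟨fun x y ↦ arcFlow u b x y + θ x y, fun x y ↦ ?_, fun x y hxy ↦ ?_, fun x ↦ ?_⟩
    · dsimp only
      rw [arcFlow_antisymm u b x y, hanti x y]
      ring
    · dsimp only
      rw [arcFlow_eq_zero_of_not_adj hub hxy, hsupp x y hxy, add_zero]
    · rw [Finset.sum_add_distrib, sum_arcFlow, hdiv]
      ring

lemma exists_isUnitFlowBetween {G : SimpleGraph V} {A Z : Finset V} (hAZ : Disjoint A Z)
    {a z : V} (ha : a ∈ A) (hz : z ∈ Z) (h : G.Reachable a z) :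
    ∃ θ, IsUnitFlowBetween G A Z θ := by
  obtain ⟨W⟩ := h
  obtain ⟨θ, hanti, hsupp, hdiv⟩ := exists_flow_of_walk W
  have hzA : z ∉ A := Finset.disjoint_right.mp hAZ hz
  refine ⟨θ, hanti, hsupp, fun x hxA hxZ ↦ ?_, ?_⟩
  · rw [hdiv, if_neg (ne_of_mem_of_not_mem ha hxA).symm, if_neg (ne_of_mem_of_not_mem hz hxZ).symm]
    ring
  · simp [hdiv, Finset.sum_sub_distrib, ha, hzA]

end UnitFlows

section Energy

variable [Fintype V]

lemma flowEnergy_nonneg {G : SimpleGraph V} {r : Sym2 V → ℝ} (hr : ∀ e ∈ G.edgeSet, 0 < r e)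
    {θ : V → V → ℝ} (hθ : ∀ x y, ¬G.Adj x y → θ x y = 0) : 0 ≤ flowEnergy r θ := by
  refine mul_nonneg (by norm_num) (Finset.sum_nonneg fun x _ ↦ Finset.sum_nonneg fun y _ ↦ ?_)
  by_cases hxy : G.Adj x y
  · exact mul_nonneg (sq_nonneg _) (hr _ hxy).le
  · simp [hθ x y hxy]

lemma effResBetween_le_flowEnergy {G : SimpleGraph V} {r : Sym2 V → ℝ}
    (hr : ∀ e ∈ G.edgeSet, 0 < r e) {A Z : Finset V} {θ : V → V → ℝ}
    (hθ : IsUnitFlowBetween G A Z θ) : effResBetween G r A Z ≤ flowEnergy r θ :=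
  csInf_le ⟨0, by rintro _ ⟨η, hη, rfl⟩; exact flowEnergy_nonneg hr hη.2.1⟩ ⟨θ, hθ, rfl⟩

lemma flowEnergy_le_sum_flowEnergy {ι : Type*} [Fintype ι] {r : Sym2 V → ℝ}
    {θ : V → V → ℝ} {η : ι → V → V → ℝ}
    (h : ∀ x y, θ x y ^ 2 * r s(x, y) ≤ ∑ i, η i x y ^ 2 * r s(x, y)) :
    flowEnergy r θ ≤ ∑ i, flowEnergy r (η i) := by
  calc flowEnergy r θ ≤ 1 / 2 * ∑ x, ∑ y, ∑ i, η i x y ^ 2 * r s(x, y) := by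
        unfold flowEnergy
        gcongr with x _ y _
        exact h x y
    _ = ∑ i, flowEnergy r (η i) := by
        simp only [flowEnergy, ← Finset.mul_sum, Finset.sum_comm (γ := ι)]

end Energy

section CapacityFlows

variable (w : V → V → ℝ)

def IsCapacityFlow (f : V → V → ℝ) : Prop :=
  (∀ x y, f x y = -f y x) ∧ ∀ x y, |f x y| ≤ w x y

def IsFeasibleFlow [Fintype V] (A Z : Finset V) (f : V → V → ℝ) : Prop :=
  IsCapacityFlow w f ∧ ∀ x, x ∉ A → x ∉ Z → ∑ y, f x y = 0

variable {w}

lemma convex_setOf_isCapacityFlow : Convex ℝ {f | IsCapacityFlow w f} := by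
  rintro f ⟨hf, hfw⟩ g ⟨hg, hgw⟩ s t hs ht hst
  refine ⟨fun x y ↦ ?_, fun x y ↦ ?_⟩
  · change s * f x y + t * g x y = -(s * f y x + t * g y x)
    rw [hf x y, hg x y]
    ring
  · calc |(s • f + t • g) x y| = |s * f x y + t * g x y| := rfl
      _ ≤ |s * f x y| + |t * g x y| := abs_add_le _ _
      _ = s * |f x y| + t * |g x y| := by rw [abs_mul, abs_mul, abs_of_nonneg hs, abs_of_nonneg ht]
      _ ≤ s * w x y + t * w x y := by gcongr; exacts [hfw x y, hgw x y]
      _ = w x y := by rw [← add_mul, hst, one_mul]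

lemma isCompact_setOf_isFeasibleFlow [Fintype V] (A Z : Finset V) :
    IsCompact {f | IsFeasibleFlow w A Z f} := by
  refine isCompact_Icc (a := -w) (b := w) |>.of_isClosed_subset ?_ fun f hf ↦ ?_
  · simp only [IsFeasibleFlow, IsCapacityFlow, Set.ofPred_and, Set.ofPred_forall]
    refine .inter (.inter ?_ ?_) ?_ <;>
      refine isClosed_iInter fun x ↦ isClosed_iInter fun y ↦ ?_
    · exact isClosed_eq (by fun_prop) (by fun_prop)
    · exact isClosed_le (by fun_prop) (by fun_prop)
    · exact isClosed_iInter fun _ ↦ isClosed_eq (by fun_prop) (by fun_prop)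
  · exact ⟨fun x y ↦ neg_le_of_abs_le (hf.1.2 x y), fun x y ↦ le_of_abs_le (hf.1.2 x y)⟩

lemma IsCapacityFlow.add_smul_arcFlow [DecidableEq V] (hw : ∀ x y, w x y = w y x)
    {f : V → V → ℝ} (hf : IsCapacityFlow w f) {a b : V} (hab : f a b < w a b) :
    IsCapacityFlow w (f + (w a b - f a b) • arcFlow a b) := by
  refine ⟨fun x y ↦ ?_, fun x y ↦ ?_⟩
  · change f x y + _ * arcFlow a b x y = -(f y x + _ * arcFlow a b y x)
    rw [hf.1 x y, arcFlow_antisymm a b x y]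
    ring
  · simp only [Pi.add_apply, Pi.smul_apply, smul_eq_mul, arcFlow]
    split_ifs with h1 h2 h2
    · obtain ⟨rfl, rfl⟩ := h1; obtain ⟨rfl, -⟩ := h2
      simpa using hf.2 x x
    · obtain ⟨rfl, rfl⟩ := h1
      rw [abs_le]; constructor <;> linarith [hf.2 x y, abs_le.mp (hf.2 x y)]
    · obtain ⟨rfl, rfl⟩ := h2
      rw [hf.1 x y, abs_le]; constructor <;> linarith [abs_le.mp (hf.2 y x), hw x y]
    · simpa using hf.2 x y

end CapacityFlows

section MaxFlow

variable [Fintype V] [DecidableEq V] {w : V → V → ℝ}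

lemma IsCapacityFlow.exists_divergence_add_arcFlow (hw : ∀ x y, w x y = w y x)
    {f : V → V → ℝ} (hf : IsCapacityFlow w f) {a b : V}
    (hab : Relation.ReflTransGen (fun x y ↦ f x y < w x y) a b) :
    ∃ (g : V → V → ℝ) (δ : ℝ), IsCapacityFlow w g ∧ 0 < δ ∧
      ∀ x, ∑ y, g x y = ∑ y, (f + δ • arcFlow a b) x y := by
  induction hab with
  | refl => exact ⟨f, 1, hf, one_pos, fun x ↦ by simp [arcFlow]⟩
  | @tail b c _ hbc ih =>
    obtain ⟨g, δ, hg, hδ, hgdiv⟩ := ih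
    set ρ := w b c - f b c
    have hρ : 0 < ρ := sub_pos.mpr hbc
    -- a convex combination of `g` and the saturation of the arc `(b, c)` pushes `δρ/(δ+ρ)`
    -- from `a` to `c`
    refine ⟨(ρ / (δ + ρ)) • g + (δ / (δ + ρ)) • (f + ρ • arcFlow b c), δ * ρ / (δ + ρ),
      convex_setOf_isCapacityFlow hg (hf.add_smul_arcFlow hw hbc) (by positivity) (by positivity)
        (by field_simp; ring), by positivity, fun x ↦ ?_⟩
    have hsum := hgdiv x
    simp only [Pi.add_apply, Pi.smul_apply, smul_eq_mul, Finset.sum_add_distrib,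
      ← Finset.mul_sum, sum_arcFlow] at hsum ⊢
    rw [hsum]
    field_simp
    ring

lemma IsFeasibleFlow.exists_value_gt {A Z : Finset V} (hw : ∀ x y, w x y = w y x)
    (hAZ : Disjoint A Z) {f : V → V → ℝ} (hf : IsFeasibleFlow w A Z f) {a z : V} (ha : a ∈ A)
    (hz : z ∈ Z) (haz : Relation.ReflTransGen (fun x y ↦ f x y < w x y) a z) :
    ∃ g, IsFeasibleFlow w A Z g ∧ ∑ x ∈ A, ∑ y, f x y < ∑ x ∈ A, ∑ y, g x y := by
  obtain ⟨g, δ, hg, hδ, hgdiv⟩ := hf.1.exists_divergence_add_arcFlow hw haz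
  have hzA : z ∉ A := Finset.disjoint_right.mp hAZ hz
  simp only [Pi.add_apply, Pi.smul_apply, smul_eq_mul, Finset.sum_add_distrib, ← Finset.mul_sum,
    sum_arcFlow] at hgdiv
  refine ⟨g, ⟨hg, fun x hxA hxZ ↦ ?_⟩, ?_⟩
  · rw [hgdiv, hf.2 x hxA hxZ, if_neg (ne_of_mem_of_not_mem ha hxA).symm,
      if_neg (ne_of_mem_of_not_mem hz hxZ).symm]
    ring
  · simp [hgdiv, Finset.sum_add_distrib, Finset.sum_sub_distrib, ← Finset.mul_sum, ha, hzA, hδ]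

theorem exists_isFeasibleFlow_value_eq_cut (hw0 : ∀ x y, 0 ≤ w x y) (hw : ∀ x y, w x y = w y x)
    {A Z : Finset V} (hAZ : Disjoint A Z) :
    ∃ f S, IsFeasibleFlow w A Z f ∧ A ⊆ S ∧ Disjoint S Z ∧
      ∑ x ∈ A, ∑ y, f x y = ∑ x ∈ S, ∑ y ∈ Sᶜ, w x y := by
  obtain ⟨f, hf, hmax⟩ := (isCompact_setOf_isFeasibleFlow A Z).exists_isMaxOn
    ⟨0, ⟨by simp, by simpa using hw0⟩, by simp⟩ (by fun_prop : Continuous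
      fun f : V → V → ℝ ↦ ∑ x ∈ A, ∑ y, f x y).continuousOn
  classical
  set S := Finset.univ.filter fun x ↦ ∃ a ∈ A, Relation.ReflTransGen (fun x y ↦ f x y < w x y) a x
  have hAS : A ⊆ S := fun a ha ↦ Finset.mem_filter.mpr ⟨Finset.mem_univ _, a, ha, .refl⟩
  have hSZ : Disjoint S Z := Finset.disjoint_left.mpr fun z hzS hz ↦ by
    obtain ⟨a, ha, haz⟩ := (Finset.mem_filter.mp hzS).2
    obtain ⟨g, hg, hlt⟩ := hf.exists_value_gt hw hAZ ha hz haz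
    exact (hmax hg).not_gt hlt
  refine ⟨f, S, hf, hAS, hSZ, ?_⟩
  rw [← sum_sum_compl_eq_sum_source hf.1.1 hf.2 hAS hSZ]
  refine Finset.sum_congr rfl fun x hx ↦ Finset.sum_congr rfl fun y hy ↦ ?_
  -- an unsaturated arc out of `S` would put its head in `S`
  refine (le_abs_self _).trans (hf.1.2 x y) |>.eq_or_lt.resolve_right fun hxy ↦ ?_
  obtain ⟨a, ha, hax⟩ := (Finset.mem_filter.mp hx).2
  exact Finset.mem_compl.mp hy (Finset.mem_filter.mpr ⟨Finset.mem_univ _, a, ha, hax.tail hxy⟩)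

end MaxFlow

section Cuts

variable [Fintype V] [DecidableEq V]

lemma sum_sum_compl_eq_sum_sum_ite (S : Finset V) (g : V → V → ℝ) :
    ∑ x ∈ S, ∑ y ∈ Sᶜ, g x y = ∑ x, ∑ y, if x ∈ S ∧ y ∉ S then g x y else 0 := by
  simp only [← Finset.mem_compl, ite_and, Finset.sum_ite_irrel, Finset.sum_const_zero,
    Finset.sum_ite_mem, Finset.univ_inter]

lemma sum_sum_compl_le_sum_sum_compl_abs {θ : V → V → ℝ} (hθ : ∀ x y, θ x y = -θ y x)
    {S T : Finset V} (hST : ∀ x ∈ T, ∀ y ∉ T, θ x y ≠ 0 → ¬(x ∈ S ↔ y ∈ S)) :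
    ∑ x ∈ T, ∑ y ∈ Tᶜ, θ x y ≤ ∑ x ∈ S, ∑ y ∈ Sᶜ, |θ x y| := by
  -- a `T`-crossing pair carrying flow crosses `S` either outwards or inwards
  let out (x y : V) : ℝ := if x ∈ S ∧ y ∉ S ∧ x ∈ T ∧ y ∉ T then |θ x y| else 0
  let into (x y : V) : ℝ := if x ∈ S ∧ y ∉ S ∧ x ∉ T ∧ y ∈ T then |θ x y| else 0
  have hout x y : 0 ≤ out x y := by simp only [out]; split_ifs <;> positivity
  have hinto x y : 0 ≤ into x y := by simp only [into]; split_ifs <;> positivity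
  have hpt x y : (if x ∈ T ∧ y ∉ T then θ x y else 0) ≤ out x y + into y x := by
    by_cases hT : x ∈ T ∧ y ∉ T
    · by_cases h0 : θ x y = 0
      · simpa [h0] using add_nonneg (hout x y) (hinto y x)
      have hS := hST x hT.1 y hT.2 h0
      by_cases hx : x ∈ S
      · have hy : y ∉ S := fun hy ↦ hS ⟨fun _ ↦ hy, fun _ ↦ hx⟩
        simp [out, into, hT, hx, hy, le_abs_self]
      · have hy : y ∈ S := by tauto
        simp [out, into, hT, hx, hy, hθ x y, neg_le_abs]
    · simpa [hT] using add_nonneg (hout x y) (hinto y x)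
  calc ∑ x ∈ T, ∑ y ∈ Tᶜ, θ x y = ∑ x, ∑ y, if x ∈ T ∧ y ∉ T then θ x y else 0 :=
        sum_sum_compl_eq_sum_sum_ite T θ
    _ ≤ ∑ x, ∑ y, (out x y + into y x) := by gcongr with x _ y _; exact hpt x y
    _ = ∑ x, ∑ y, (out x y + into x y) := by
        simp only [Finset.sum_add_distrib]; rw [Finset.sum_comm (f := fun x y ↦ into y x)]
    _ ≤ ∑ x, ∑ y, if x ∈ S ∧ y ∉ S then |θ x y| else 0 := by
        gcongr with x _ y _
        simp only [out, into]; split_ifs <;> first | tauto | simp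
    _ = ∑ x ∈ S, ∑ y ∈ Sᶜ, |θ x y| := (sum_sum_compl_eq_sum_sum_ite S _).symm

end Cuts

section EdgeCuts

variable [DecidableEq V]

lemma exists_forall_walk_crosses {ι : Type*} {G : SimpleGraph V} {H : ι → SimpleGraph V}
    {A Z : Finset V} {As Zs : ι → Finset V}
    (hpaths : ∀ (a z : ι → V) (P : ∀ i, (H i).Walk (a i) (z i)),
      (∀ i, (P i).IsPath) → (∀ i, a i ∈ As i) → (∀ i, z i ∈ Zs i) →
      ∃ (u w : V) (Q : G.Walk u w), u ∈ A ∧ w ∈ Z ∧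
        ∀ e ∈ Q.edges, ∃ i, e ∈ (P i).edges)
    {S : Finset V} (hAS : A ⊆ S) (hSZ : Disjoint S Z) :
    ∃ i, ∀ a ∈ As i, ∀ z ∈ Zs i, ∀ W : (H i).Walk a z,
      ∃ d ∈ W.darts, ¬(d.fst ∈ S ↔ d.snd ∈ S) := by
  by_contra! h
  choose a ha z hz W hW using h
  obtain ⟨u, v, Q, hu, hv, hQ⟩ :=
    hpaths a z (fun i ↦ (W i).bypass) (fun i ↦ (W i).bypass_isPath) ha hz
  obtain ⟨d, hdQ, hdS, hdS'⟩ := Q.exists_boundary_dart (S : Set V) (hAS hu)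
    (Finset.disjoint_right.mp hSZ hv)
  obtain ⟨i, hi⟩ := hQ d.edge (List.mem_map_of_mem hdQ)
  obtain ⟨d', hd', hdd'⟩ := List.mem_map.mp hi
  have hcross := hW i d' ((W i).darts_bypass_subset_darts hd')
  rcases Sym2.eq_iff.mp hdd' with ⟨h1, h2⟩ | ⟨h1, h2⟩
  · exact hdS' (h2 ▸ hcross.mp (h1 ▸ hdS))
  · exact hdS' (h1 ▸ hcross.mpr (h2 ▸ hdS))

variable [Fintype V]

lemma IsUnitFlowBetween.one_le_sum_sum_compl_abs {H : SimpleGraph V} {A Z S : Finset V}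
    {θ : V → V → ℝ} (hθ : IsUnitFlowBetween H A Z θ)
    (hS : ∀ a ∈ A, ∀ z ∈ Z, ∀ W : H.Walk a z, ∃ d ∈ W.darts, ¬(d.fst ∈ S ↔ d.snd ∈ S)) :
    1 ≤ ∑ x ∈ S, ∑ y ∈ Sᶜ, |θ x y| := by
  classical
  set T := Finset.univ.filter fun v ↦
    ∃ a ∈ A, ∃ W : H.Walk a v, ∀ d ∈ W.darts, (d.fst ∈ S ↔ d.snd ∈ S)
  have hAT : A ⊆ T := fun a ha ↦ Finset.mem_filter.mpr ⟨Finset.mem_univ _, a, ha, .nil, by simp⟩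
  have hTZ : Disjoint T Z := Finset.disjoint_left.mpr fun z hzT hz ↦ by
    obtain ⟨a, ha, W, hW⟩ := (Finset.mem_filter.mp hzT).2
    obtain ⟨d, hd, hdS⟩ := hS a ha z hz W
    exact hdS (hW d hd)
  have hST : ∀ x ∈ T, ∀ y ∉ T, θ x y ≠ 0 → ¬(x ∈ S ↔ y ∈ S) := by
    intro x hx y hy hxy hS
    have hadj : H.Adj x y := by_contra fun h ↦ hxy (hθ.2.1 x y h)
    obtain ⟨a, ha, W, hW⟩ := (Finset.mem_filter.mp hx).2
    refine hy (Finset.mem_filter.mpr ⟨Finset.mem_univ _, a, ha, W.concat hadj, fun d hd ↦ ?_⟩)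
    rw [Walk.darts_concat, List.concat_eq_append, List.mem_append, List.mem_singleton] at hd
    rcases hd with hd | rfl
    exacts [hW d hd, hS]
  calc (1 : ℝ) = ∑ x ∈ T, ∑ y ∈ Tᶜ, θ x y := (hθ.sum_sum_compl_eq_one hAT hTZ).symm
    _ ≤ ∑ x ∈ S, ∑ y ∈ Sᶜ, |θ x y| := sum_sum_compl_le_sum_sum_compl_abs hθ.1 hST

end EdgeCuts

theorem effResBetween_le_sum_flowEnergy [Fintype V] [DecidableEq V] {ι : Type*} [Fintype ι]
    {G : SimpleGraph V} {r : Sym2 V → ℝ} (hr : ∀ e ∈ G.edgeSet, 0 < r e)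
    {H : ι → SimpleGraph V} (hH : ∀ i, H i ≤ G) {A Z : Finset V} (hAZ : Disjoint A Z)
    {As Zs : ι → Finset V} {θ : ι → V → V → ℝ}
    (hθ : ∀ i, IsUnitFlowBetween (H i) (As i) (Zs i) (θ i))
    (hcut : ∀ S : Finset V, A ⊆ S → Disjoint S Z → ∃ i, ∀ a ∈ As i, ∀ z ∈ Zs i,
      ∀ W : (H i).Walk a z, ∃ d ∈ W.darts, ¬(d.fst ∈ S ↔ d.snd ∈ S)) :
    effResBetween G r A Z ≤ ∑ i, flowEnergy r (θ i) := by
  set w : V → V → ℝ := fun x y ↦ √(∑ i, θ i x y ^ 2)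
  have hθw i x y : |θ i x y| ≤ w x y :=
    Real.abs_le_sqrt (Finset.single_le_sum (fun j _ ↦ sq_nonneg (θ j x y)) (Finset.mem_univ i))
  have hw x y : w x y = w y x := by simp only [w, (hθ _).1 x y, neg_sq]
  have hwG x y (hxy : ¬G.Adj x y) : w x y = 0 := by
    simp [w, fun i ↦ (hθ i).2.1 x y fun h ↦ hxy (hH i h)]
  obtain ⟨f, S, hf, hAS, hSZ, hval⟩ :=
    exists_isFeasibleFlow_value_eq_cut (fun x y ↦ Real.sqrt_nonneg _) hw hAZ
  set v := ∑ x ∈ A, ∑ y, f x y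
  have hv : 1 ≤ v := by
    obtain ⟨i, hi⟩ := hcut S hAS hSZ
    calc 1 ≤ ∑ x ∈ S, ∑ y ∈ Sᶜ, |θ i x y| := (hθ i).one_le_sum_sum_compl_abs hi
      _ ≤ v := hval ▸ by gcongr with x _ y _; exact hθw i x y
  have hfG x y (hxy : ¬G.Adj x y) : f x y = 0 := abs_nonpos_iff.mp (hwG x y hxy ▸ hf.1.2 x y)
  have hunit : IsUnitFlowBetween G A Z (v⁻¹ • f) :=
    isUnitFlowBetween_inv_smul hf.1.1 hfG hf.2 (by positivity)
  refine (effResBetween_le_flowEnergy hr hunit).trans (flowEnergy_le_sum_flowEnergy fun x y ↦ ?_)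
  by_cases hxy : G.Adj x y
  · rw [← Finset.sum_mul]
    gcongr
    · exact (hr _ hxy).le
    calc (v⁻¹ • f) x y ^ 2 ≤ w x y ^ 2 := by
          refine sq_le_sq.mpr (le_trans ?_ ((hf.1.2 x y).trans (le_abs_self _)))
          rw [Pi.smul_apply, Pi.smul_apply, smul_eq_mul, abs_mul, abs_inv,
            abs_of_pos (by positivity)]
          exact mul_le_of_le_one_left (abs_nonneg _) (inv_le_one_of_one_le₀ hv)
      _ = ∑ i, θ i x y ^ 2 := Real.sq_sqrt (Finset.sum_nonneg fun i _ ↦ sq_nonneg _)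
  · simp [hfG x y hxy, fun i ↦ (hθ i).2.1 x y fun h ↦ hxy (hH i h)]

end

/-- **Generalized series law**: let `G` be a finite network, `H₁, …, Hₙ`
subgraphs of `G`, `Aᵢ, Zᵢ` disjoint vertex sets in `Hᵢ` (joined within `Hᵢ`),
and `A, Z` disjoint vertex sets in `G`.  Suppose that for every choice of paths
`Pᵢ` within `Hᵢ` connecting `Aᵢ` to `Zᵢ`, the union `⋃ᵢ Pᵢ` contains a path
from `A` to `Z`.  Then `R_G(A, Z) ≤ ∑ᵢ R_{Hᵢ}(Aᵢ, Zᵢ)`. -/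
theorem effRes_series_law {V : Type*} [Fintype V] [DecidableEq V]
    (G : SimpleGraph V) (r : Sym2 V → ℝ) (hr : ∀ e ∈ G.edgeSet, 0 < r e)
    (n : ℕ) (H : Fin n → SimpleGraph V) (hH : ∀ i, H i ≤ G)
    (A Z : Finset V) (hAZ : Disjoint A Z)
    (As Zs : Fin n → Finset V) (hAZs : ∀ i, Disjoint (As i) (Zs i))
    (hjoin : ∀ i, ∃ a z : V, a ∈ As i ∧ z ∈ Zs i ∧ (H i).Reachable a z)
    (hpaths : ∀ (a z : Fin n → V) (P : ∀ i, (H i).Walk (a i) (z i)),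
      (∀ i, (P i).IsPath) → (∀ i, a i ∈ As i) → (∀ i, z i ∈ Zs i) →
      ∃ (u w : V) (Q : G.Walk u w), u ∈ A ∧ w ∈ Z ∧
        ∀ e ∈ Q.edges, ∃ i, e ∈ (P i).edges) :
    effResBetween G r A Z ≤ ∑ i, effResBetween (H i) r (As i) (Zs i) := by
  refine le_sum_csInf (fun i ↦ ?_) fun E hE ↦ ?_
  · obtain ⟨a, z, ha, hz, haz⟩ := hjoin i
    obtain ⟨θ, hθ⟩ := exists_isUnitFlowBetween (hAZs i) ha hz haz
    exact ⟨_, θ, hθ, rfl⟩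
  · choose θ hθ hEθ using hE
    simp only [← hEθ]
    exact effResBetween_le_sum_flowEnergy hr hH hAZ hθ
      fun S hAS hSZ ↦ exists_forall_walk_crosses hpaths hAS hSZ
end

section
/- Second moment of exit time via Green's function: let G be a finite network, B a subset of vertices, x ∈ B, and τ_B the first time the random walk started from x exits B. Then E[τ_B²] ≤ 2 ∑_{y,z ∈ B} G_B(x,y) G_B(y,z), where G_B(x,y) is the expected number of visits to y before exiting B for the walk started at x. -/
open Finset
open scoped ENNReal

/-- `stayProb p B x n y` is the probability that the random walk with
transition probabilities `p`, started at `x`, satisfies `X_n = y` while having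
stayed inside `B` at all times `0, 1, …, n` (i.e. `n < τ_B` and `X_n = y`). -/
noncomputable def stayProb {V : Type*} [Fintype V] [DecidableEq V]
    (p : V → V → ℝ≥0∞) (B : Finset V) (x : V) : ℕ → V → ℝ≥0∞
  | 0, y => if y = x ∧ x ∈ B then 1 else 0
  | n + 1, y => if y ∈ B then ∑ z, stayProb p B x n z * p z y else 0

/-- The Green's function `G_B(x,y)`: the expected number of visits to `y`
before exiting `B`, for the walk started at `x`. -/
noncomputable def green {V : Type*} [Fintype V] [DecidableEq V]
    (p : V → V → ℝ≥0∞) (B : Finset V) (x y : V) : ℝ≥0∞ :=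
  ∑' n : ℕ, stayProb p B x n y

lemma stayProb_eq_zero {V : Type*} [Fintype V] [DecidableEq V]
    (p : V → V → ℝ≥0∞) (B : Finset V) (x : V) (n : ℕ) {z : V} (hz : z ∉ B) :
    stayProb p B x n z = 0 := by
  cases n with
  | zero =>
    rw [stayProb, if_neg]
    rintro ⟨rfl, h⟩; exact hz h
  | succ n => rw [stayProb, if_neg hz]

lemma stayProb_add {V : Type*} [Fintype V] [DecidableEq V]
    (p : V → V → ℝ≥0∞) (B : Finset V) (x : V) (i k : ℕ) (z : V) :
    stayProb p B x (i + k) z = ∑ y, stayProb p B x i y * stayProb p B y k z := by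
  induction k generalizing z with
  | zero =>
    rw [Nat.add_zero, Finset.sum_eq_single z]
    · by_cases hz : z ∈ B
      · simp [stayProb, hz]
      · simp [stayProb, hz, stayProb_eq_zero p B x i hz]
    · intro y _ hy
      have : ¬ (z = y ∧ y ∈ B) := fun h => hy h.1.symm
      rw [stayProb, if_neg this, mul_zero]
    · intro h; exact absurd (Finset.mem_univ z) h
  | succ k ih =>
    rw [show i + (k + 1) = (i + k) + 1 from rfl]
    by_cases hz : z ∈ B
    · rw [stayProb, if_pos hz]
      simp only [ih, Finset.sum_mul, mul_assoc]
      rw [Finset.sum_comm]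
      refine Finset.sum_congr rfl fun y _ => ?_
      rw [stayProb, if_pos hz, Finset.mul_sum]
    · rw [stayProb, if_neg hz]
      symm
      refine Finset.sum_eq_zero fun y _ => ?_
      rw [stayProb, if_neg hz, mul_zero]

/-- **Second moment of the exit time via the Green's function**: for the
random walk started at `x ∈ B` and `τ_B` the first exit time of `B`, one has
`E[τ_B²] ≤ 2 ∑_{y,z ∈ B} G_B(x,y) G_B(y,z)`.  Here
`E[τ_B²] = ∑_{i,j ≥ 0} P(i < τ_B ∧ j < τ_B)`, and
`P(i < τ_B ∧ j < τ_B) = P(max i j < τ_B) = ∑_{y ∈ B} stayProb p B x (max i j) y`. -/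
theorem exit_time_sq_le_green {V : Type*} [Fintype V] [DecidableEq V]
    (p : V → V → ℝ≥0∞) (hp : ∀ v, ∑ w, p v w = 1)
    (B : Finset V) (x : V) (hx : x ∈ B) :
    (∑' i : ℕ, ∑' j : ℕ, ∑ y ∈ B, stayProb p B x (max i j) y)
      ≤ 2 * ∑ y ∈ B, ∑ z ∈ B, green p B x y * green p B y z := by
  set f : ℕ → ℝ≥0∞ := fun n => ∑ y ∈ B, stayProb p B x n y with hf
  -- Key identity: ∑' i, ∑' k, f (i + k) = RHS sum
  have key : (∑' i : ℕ, ∑' k : ℕ, f (i + k))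
      = ∑ y ∈ B, ∑ z ∈ B, green p B x y * green p B y z := by
    have hfik : ∀ i k : ℕ, f (i + k)
        = ∑ y ∈ B, ∑ z ∈ B, stayProb p B x i y * stayProb p B y k z := by
      intro i k
      simp only [hf, stayProb_add p B x i k]
      rw [Finset.sum_comm]
      refine (Finset.sum_subset (Finset.subset_univ B) fun w _ hw =>
        Finset.sum_eq_zero fun z _ => ?_).symm
      rw [stayProb_eq_zero p B x i hw, zero_mul]
    calc (∑' i : ℕ, ∑' k : ℕ, f (i + k))
        = ∑' i : ℕ, ∑' k : ℕ, ∑ y ∈ B, ∑ z ∈ B,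
            stayProb p B x i y * stayProb p B y k z := by
          simp only [hfik]
      _ = ∑' i : ℕ, ∑ y ∈ B, ∑ z ∈ B, stayProb p B x i y * green p B y z := by
          refine tsum_congr fun i => ?_
          rw [Summable.tsum_finsetSum fun _ _ => ENNReal.summable]
          refine Finset.sum_congr rfl fun y _ => ?_
          rw [Summable.tsum_finsetSum fun _ _ => ENNReal.summable]
          refine Finset.sum_congr rfl fun z _ => ?_
          rw [ENNReal.tsum_mul_left]; rfl
      _ = ∑ y ∈ B, ∑ z ∈ B, green p B x y * green p B y z := by
          rw [Summable.tsum_finsetSum fun _ _ => ENNReal.summable]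
          refine Finset.sum_congr rfl fun y _ => ?_
          rw [Summable.tsum_finsetSum fun _ _ => ENNReal.summable]
          refine Finset.sum_congr rfl fun z _ => ?_
          rw [ENNReal.tsum_mul_right]; rfl
  -- A : the "i ≤ j" half
  have hA : ∀ i : ℕ, (∑' j : ℕ, if i ≤ j then f j else 0) = ∑' k : ℕ, f (i + k) := by
    intro i
    symm
    have hinj : Function.Injective (fun k : ℕ => i + k) := fun a b h => Nat.add_left_cancel h
    have := hinj.tsum_eq (f := fun j => if i ≤ j then f j else 0) ?_
    · rw [← this]
      refine tsum_congr fun k => ?_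
      rw [if_pos (Nat.le_add_right i k)]
    · intro j hj
      have hij : i ≤ j := by
        by_contra h
        exact hj (if_neg h)
      exact ⟨j - i, show i + (j - i) = j by omega⟩
  -- pointwise bound on the max
  have hmax : ∀ i j : ℕ, f (max i j)
      ≤ (if i ≤ j then f j else 0) + (if j ≤ i then f i else 0) := by
    intro i j
    rcases le_total i j with h | h
    · rw [max_eq_right h, if_pos h]; exact le_add_right le_rfl
    · rw [max_eq_left h, if_pos h]; exact le_add_left le_rfl
  calc (∑' i : ℕ, ∑' j : ℕ, ∑ y ∈ B, stayProb p B x (max i j) y)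
      ≤ ∑' i : ℕ, ∑' j : ℕ,
          ((if i ≤ j then f j else 0) + (if j ≤ i then f i else 0)) := by
        exact ENNReal.tsum_le_tsum fun i => ENNReal.tsum_le_tsum fun j => hmax i j
    _ = (∑' i : ℕ, ∑' j : ℕ, if i ≤ j then f j else 0)
        + ∑' i : ℕ, ∑' j : ℕ, if j ≤ i then f i else 0 := by
        rw [← ENNReal.tsum_add]
        exact tsum_congr fun i => ENNReal.tsum_add
    _ = (∑' i : ℕ, ∑' j : ℕ, if i ≤ j then f j else 0)
        + ∑' i : ℕ, ∑' j : ℕ, if i ≤ j then f j else 0 := by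
        congr 1
        exact ENNReal.tsum_comm
    _ = 2 * ∑' i : ℕ, ∑' k : ℕ, f (i + k) := by
        rw [two_mul]
        simp only [hA]
    _ = 2 * ∑ y ∈ B, ∑ z ∈ B, green p B x y * green p B y z := by rw [key]
end
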